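/- Every strongly increasing numerical semigroup is a GSI-semigroup. Precisely, if S̄ = ⟨v̄₀,…,v̄_h⟩ is generated by a characteristic sequence with v̄₀ < ⋯ < v̄_h and h ≥ 1, then setting d = gcd(v̄₀,…,v̄_{h−1}), γ = v̄_h, and S = ⟨v̄₀/d,…,v̄_{h−1}/d⟩, one has S̄ = S ⊕_{d,γ} ℕ and γ > max{d·F(S), d·(v̄_{h−1}/d)}. -/

import Mathlib

/-- A numerical semigroup: a subset of ℕ containing 0, closed under addition,
with finite complement. -/
def IsNumericalSemigroup (S : Set ℕ) : Prop :=
  0 ∈ S ∧ (∀ a ∈ S, ∀ b ∈ S, a + b ∈ S) ∧ Sᶜ.Finite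

/-- Frobenius number, as an integer (so that F(ℕ) = -1). -/
noncomputable def Frob (S : Set ℕ) : ℤ :=
  sSup (((fun n : ℕ => (n : ℤ)) '' Sᶜ) ∪ {-1})

/-- Submonoid of ℕ generated by a set. -/
def GenSg (A : Set ℕ) : Set ℕ := (AddSubmonoid.closure A : Set ℕ)

/-- The gluing S ⊕_{d,γ} ℕ = d·S + ℕ·γ. -/
def Gluing (S : Set ℕ) (d γ : ℕ) : Set ℕ :=
  {x | ∃ s ∈ S, ∃ k : ℕ, x = d * s + k * γ}

/-- e_k = gcd(v₀, …, v_k). -/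
def ee (v : ℕ → ℕ) (k : ℕ) : ℕ := (Finset.range (k + 1)).gcd v

/-- (v₀,…,v_h) is a characteristic sequence. -/
def IsCharSeq (h : ℕ) (v : ℕ → ℕ) : Prop :=
  (∀ i ≤ h, 0 < v i) ∧
  (∀ k, 1 ≤ k → k ≤ h → ee v k < ee v (k - 1)) ∧
  ee v h = 1 ∧
  ∀ k, 1 ≤ k → k + 1 ≤ h → ee v (k - 1) * v k < ee v k * v (k + 1)

/-- T is a GSI-semigroup: T = S ⊕_{d,γ} ℕ where S = ⟨A⟩ is a numerical
semigroup, d ≥ 2, gcd(d,γ)=1 and γ > max{d·F(S), d·(max A)}. -/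
def IsGSI (T : Set ℕ) : Prop :=
  ∃ (A : Finset ℕ) (d γ : ℕ), A.Nonempty ∧ 2 ≤ d ∧ Nat.Coprime d γ ∧
    IsNumericalSemigroup (GenSg ↑A) ∧
    (γ : ℤ) > d * Frob (GenSg ↑A) ∧ (∀ a ∈ A, d * a < γ) ∧
    T = Gluing (GenSg ↑A) d γ

/-!
Put `d = e_{h-1}`. The generators `v̄₀, …, v̄_{h-1}` are `d` times those of `S`, so
`S̄ = d·S + ℕ·v̄_h`. Brauer's argument shows that every multiple of `e_m` exceeding
`∑_{j<m} (e_j/e_{j+1} - 1)·v̄_{j+1} - v̄₀` lies in `⟨v̄₀, …, v̄_m⟩`; for `m = h-1` this bounds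
`d·F(S)`. The strong-increase condition `e_j v̄_{j+1} < e_{j+1} v̄_{j+2}` makes the sum telescope
below `v̄_h - v̄₁`.
-/

open Finset

theorem Nat.exists_lt_dvd_sub_mul {a g : ℕ} (hg : 0 < g) {N : ℤ} (hN : (Nat.gcd a g : ℤ) ∣ N) :
    ∃ c < g / Nat.gcd a g, (g : ℤ) ∣ N - c * a := by
  set g' := Nat.gcd a g
  obtain ⟨a', ha'⟩ := Nat.gcd_dvd_left a g
  obtain ⟨q, hq⟩ := Nat.gcd_dvd_right a g
  have hq0 : (0 : ℤ) < q := by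
    have : 0 < q := Nat.pos_of_mul_pos_left (hq ▸ hg : 0 < g' * q)
    exact_mod_cast this
  obtain ⟨M, rfl⟩ := hN
  set t := M * Nat.gcdA a g
  have ht : 0 ≤ t % q := Int.emod_nonneg _ hq0.ne'
  refine ⟨(t % q).toNat, ?_, ?_⟩
  · have : t % q < q := Int.emod_lt_of_pos _ hq0
    have hgq : g / g' = q := by
      rw [hq, Nat.mul_div_cancel_left _ (Nat.gcd_pos_of_pos_right a hg)]
    omega
  · -- Bézout writes `g' M = a t + g y`; replacing `t` by `t mod q` changes `a t` by a multiple
    -- of `a q = a' g`.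
    refine ⟨M * Nat.gcdB a g + a' * (t / q), ?_⟩
    rw [Int.toNat_of_nonneg ht]
    have ha : (a : ℤ) = g' * a' := by exact_mod_cast ha'
    have hg : (g : ℤ) = g' * q := by exact_mod_cast hq
    linear_combination M * Nat.gcd_eq_gcd_ab a g - a * Int.emod_add_mul_ediv t q +
      (t / q) * q * ha - a' * (t / q) * hg

section ee

variable {a : ℕ → ℕ}

theorem ee_succ (a : ℕ → ℕ) (m : ℕ) : ee a (m + 1) = Nat.gcd (a (m + 1)) (ee a m) := by
  rw [ee, range_add_one, gcd_insert]
  rfl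

theorem ee_zero (a : ℕ → ℕ) : ee a 0 = a 0 := by
  simp [ee]

theorem ee_dvd {i m : ℕ} (hi : i ≤ m) : ee a m ∣ a i :=
  Finset.gcd_dvd (mem_range.mpr (Nat.lt_succ_of_le hi))

theorem ee_succ_dvd (a : ℕ → ℕ) (m : ℕ) : ee a (m + 1) ∣ ee a m := by
  rw [ee_succ]
  exact Nat.gcd_dvd_right _ _

theorem ee_pos (h0 : 0 < a 0) (m : ℕ) : 0 < ee a m :=
  Nat.pos_of_dvd_of_pos (ee_dvd (Nat.zero_le m)) h0

end ee

theorem mul_mem_genSg {A : Set ℕ} {x : ℕ} (hx : x ∈ A) (n : ℕ) : n * x ∈ GenSg A :=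
  (AddSubmonoid.closure A).nsmul_mem (AddSubmonoid.subset_closure hx) n

theorem genSg_image_mul (d : ℕ) (A : Set ℕ) : GenSg ((d * ·) '' A) = (d * ·) '' GenSg A := by
  have := congrArg SetLike.coe (AddMonoidHom.map_mclosure (AddMonoidHom.mulLeft d) A)
  rw [AddSubmonoid.coe_map] at this
  exact this.symm

theorem genSg_insert_image_mul (A : Set ℕ) (d γ : ℕ) :
    GenSg (insert γ ((d * ·) '' A)) = Gluing (GenSg A) d γ := by
  ext x
  rw [Set.insert_eq, GenSg, AddSubmonoid.closure_union, SetLike.mem_coe, AddSubmonoid.mem_sup]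
  have hmem (z : ℕ) : z ∈ AddSubmonoid.closure ((d * ·) '' A) ↔ z ∈ (d * ·) '' GenSg A := by
    rw [← genSg_image_mul]
    rfl
  simp only [AddSubmonoid.mem_closure_singleton, hmem]
  constructor
  · rintro ⟨_, ⟨k, rfl⟩, _, ⟨s, hs, rfl⟩, rfl⟩
    exact ⟨s, hs, k, by rw [smul_eq_mul, add_comm]⟩
  · rintro ⟨s, hs, k, rfl⟩
    exact ⟨k * γ, ⟨k, rfl⟩, d * s, ⟨s, hs, rfl⟩, add_comm _ _⟩

/-- Brauer's bound for the Frobenius number of `⟨a₀, …, a_m⟩` inside `e_m ℕ`. -/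
def brauerBound (a : ℕ → ℕ) (m : ℕ) : ℤ :=
  ∑ j ∈ range m, (((ee a j / ee a (j + 1) : ℕ) : ℤ) - 1) * a (j + 1) - a 0

theorem brauerBound_succ (a : ℕ → ℕ) (m : ℕ) :
    brauerBound a (m + 1) =
      brauerBound a m + (((ee a m / ee a (m + 1) : ℕ) : ℤ) - 1) * a (m + 1) := by
  rw [brauerBound, brauerBound, sum_range_succ]
  ring

theorem exists_mem_genSg_of_brauerBound_lt {a : ℕ → ℕ} (h0 : 0 < a 0) (m : ℕ) {N : ℤ}
    (hdvd : (ee a m : ℤ) ∣ N) (hN : brauerBound a m < N) :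
    ∃ n ∈ GenSg (a '' {i | i ≤ m}), (n : ℤ) = N := by
  induction m generalizing N with
  | zero =>
    rw [ee_zero] at hdvd
    obtain ⟨M, rfl⟩ := hdvd
    have hM : 0 ≤ M := by
      rw [brauerBound, range_zero, sum_empty, zero_sub] at hN
      nlinarith
    lift M to ℕ using hM
    refine ⟨M * a 0, ?_, by push_cast; ring⟩
    exact mul_mem_genSg (Set.mem_image_of_mem a (Set.mem_ofPred.2 le_rfl : 0 ∈ {i | i ≤ 0})) M
  | succ m ih =>
    -- Subtracting `c·a_{m+1}` with `c < e_m / e_{m+1}` reaches a multiple of `e_m` and costs at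
    -- most the last summand of the bound.
    rw [ee_succ] at hdvd
    obtain ⟨c, hc, hc_dvd⟩ := Nat.exists_lt_dvd_sub_mul (ee_pos h0 m) hdvd
    rw [← ee_succ] at hc
    have hle : (c : ℤ) * a (m + 1) ≤ (((ee a m / ee a (m + 1) : ℕ) : ℤ) - 1) * a (m + 1) :=
      mul_le_mul_of_nonneg_right (by omega) (by positivity)
    obtain ⟨n, hn, hnN⟩ := ih hc_dvd (by rw [brauerBound_succ] at hN; linarith)
    refine ⟨n + c * a (m + 1), ?_, by push_cast; rw [hnN]; ring⟩
    have hsub : AddSubmonoid.closure (a '' {i | i ≤ m}) ≤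
        AddSubmonoid.closure (a '' {i | i ≤ m + 1}) :=
      AddSubmonoid.closure_mono (Set.image_mono fun i (hi : i ≤ m) => Nat.le_succ_of_le hi)
    exact add_mem (hsub hn) (mul_mem_genSg
      (Set.mem_image_of_mem a (Set.mem_ofPred.2 le_rfl : m + 1 ∈ {i | i ≤ m + 1})) c)

theorem brauerBound_lt {a : ℕ → ℕ} {m : ℕ} (h0 : 0 < a 0)
    (hsi : ∀ j < m, ee a j * a (j + 1) < ee a (j + 1) * a (j + 2)) :
    brauerBound a m < a (m + 1) := by
  have hterm : ∀ j ∈ range m, (((ee a j / ee a (j + 1) : ℕ) : ℤ) - 1) * a (j + 1) ≤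
      (a (j + 2) : ℤ) - a (j + 1) := by
    intro j hj
    set r := ee a j / ee a (j + 1)
    have hr : ee a j = ee a (j + 1) * r := (Nat.mul_div_cancel' (ee_succ_dvd a j)).symm
    have hsi_j := hsi j (mem_range.mp hj)
    rw [hr, mul_assoc] at hsi_j
    have hr_lt : (r : ℤ) * a (j + 1) < a (j + 2) := by
      exact_mod_cast Nat.lt_of_mul_lt_mul_left hsi_j
    linarith
  have htel := sum_range_sub (fun j => (a (j + 1) : ℤ)) m
  have hsum := sum_le_sum hterm
  have ha0 : (0 : ℤ) < a 0 := by exact_mod_cast h0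
  rw [brauerBound]
  linarith

theorem frob_le {S : Set ℕ} {b : ℤ} (hb : -1 ≤ b) (h : ∀ n : ℕ, b < n → n ∈ S) :
    Frob S ≤ b := by
  refine csSup_le ⟨-1, Or.inr rfl⟩ ?_
  rintro x (⟨n, hn, rfl⟩ | rfl)
  · exact not_lt.mp fun hbn => hn (h n hbn)
  · exact hb

theorem mul_frob_lt {S : Set ℕ} {d : ℕ} {c : ℤ} (hd : 0 < d) (hc : 0 < c)
    (h : ∀ n : ℕ, c ≤ d * n → n ∈ S) : d * Frob S < c := by
  have hd' : (0 : ℤ) < d := by exact_mod_cast hd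
  have hF : Frob S ≤ (c - 1) / d := by
    refine frob_le (le_trans (by norm_num) (Int.ediv_nonneg (by omega) hd'.le)) fun n hn => h n ?_
    have := Int.lt_mul_ediv_self_add (x := c - 1) hd'
    nlinarith
  calc (d : ℤ) * Frob S ≤ d * ((c - 1) / d) := mul_le_mul_of_nonneg_left hF hd'.le
    _ ≤ c - 1 := Int.mul_ediv_self_le hd'.ne'
    _ < c := sub_one_lt c

theorem image_mul_image_div_ee (a : ℕ → ℕ) (m : ℕ) :
    (ee a m * ·) '' ((fun i => a i / ee a m) '' {i | i ≤ m}) = a '' {i | i ≤ m} := by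
  rw [Set.image_image]
  exact Set.image_congr fun i hi => Nat.mul_div_cancel' (ee_dvd hi)

theorem mul_frob_lt_of_brauerBound_lt {a : ℕ → ℕ} {m : ℕ} {c : ℤ} (h0 : 0 < a 0) (hc : 0 < c)
    (hB : brauerBound a m < c) :
    ee a m * Frob (GenSg ((fun i => a i / ee a m) '' {i | i ≤ m})) < c := by
  refine mul_frob_lt (ee_pos h0 m) hc fun n hn => ?_
  obtain ⟨k, hk, hkn⟩ := exists_mem_genSg_of_brauerBound_lt h0 m
    (dvd_mul_right (ee a m : ℤ) n) (hB.trans_le hn)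
  rw [← image_mul_image_div_ee, genSg_image_mul] at hk
  obtain ⟨s, hs, rfl⟩ := hk
  have hkn' : ee a m * s = ee a m * n := by exact_mod_cast hkn
  rwa [← Nat.eq_of_mul_eq_mul_left (ee_pos h0 m) hkn']

theorem SI_is_GSI (h : ℕ) (v : ℕ → ℕ) (hh : 1 ≤ h) (hv : IsCharSeq h v)
    (hmono : ∀ i j, i < j → j ≤ h → v i < v j) :
    GenSg (v '' {i | i ≤ h}) =
      Gluing (GenSg ((fun i => v i / ee v (h - 1)) '' {i | i ≤ h - 1}))
        (ee v (h - 1)) (v h) ∧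
    (v h : ℤ) >
      max ((ee v (h - 1) : ℤ) *
          Frob (GenSg ((fun i => v i / ee v (h - 1)) '' {i | i ≤ h - 1})))
        ((ee v (h - 1) : ℤ) * ((v (h - 1) / ee v (h - 1) : ℕ) : ℤ)) := by
  obtain ⟨hvpos, -, -, hsi⟩ := hv
  have h0 : 0 < v 0 := hvpos 0 (Nat.zero_le h)
  have hvh : v '' {i | i ≤ h} = insert (v h) (v '' {i | i ≤ h - 1}) := by
    rw [← Set.image_insert_eq]
    congr 1
    ext i
    simp only [Set.mem_ofPred_eq, Set.mem_insert_iff]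
    omega
  have hB : brauerBound v (h - 1) < v h := by
    simpa [Nat.sub_add_cancel hh] using
      brauerBound_lt (m := h - 1) h0 fun j hj => by simpa using hsi (j + 1) (by omega) (by omega)
  refine ⟨by rw [hvh, ← image_mul_image_div_ee, genSg_insert_image_mul], max_lt ?_ ?_⟩
  · exact mul_frob_lt_of_brauerBound_lt h0 (by exact_mod_cast hvpos h le_rfl) hB
  · rw [← Nat.cast_mul, Nat.mul_div_cancel' (ee_dvd le_rfl)]
    exact_mod_cast hmono (h - 1) h (by omega) le_rfl
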